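/- arXiv:2502.10583 — 3 statements merged into one kernel-verified Lean document; each statement's English description precedes it below -/
import Mathlib

section
/- Fix ℓ₁, ℓ₂ > 0 and angles θ, β ∈ [0, 2π). For d > 0, let x₁ = (0,d), x₂ = (ℓ₁ cos θ, d + ℓ₁ sin θ), x₃ = (0,0), x₄ = (ℓ₂ cos β, ℓ₂ sin β), and let α ∈ (0,2). Then as d → ∞, (d₁₄^α − d₁₃^α) − (d₂₄^α − d₂₃^α) is asymptotically equivalent to d^{α−2}·α·ℓ₁ℓ₂·(cos β cos θ − (1−α) sin β sin θ), where d_{ij} = ‖x_j − x_i‖ (provided the trigonometric factor is nonzero). -/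
open MeasureTheory Real Filter

noncomputable section

abbrev E2 : Type := EuclideanSpace ℝ (Fin 2)

/-- The point of `ℝ²` with coordinates `(a, b)`. -/
def pt (a b : ℝ) : E2 := (WithLp.equiv 2 (Fin 2 → ℝ)).symm ![a, b]

private lemma hder (r : ℝ) (u : ℝ) (hu : 1 + u ≠ 0) :
    HasDerivAt (fun u : ℝ => (1+u) ^ r) (r * (1+u) ^ (r-1)) u := by
  have h2 : HasDerivAt (fun u : ℝ => 1 + u) 1 u := by
    simpa using (hasDerivAt_id u).const_add (1:ℝ)
  simpa using h2.rpow_const (Or.inl hu)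

private lemma lem1 (r : ℝ) :
    Tendsto (fun u : ℝ => ((1+u) ^ r - 1) / u) (nhdsWithin 0 {0}ᶜ) (nhds r) := by
  have h : HasDerivAt (fun u : ℝ => (1+u) ^ r) r 0 := by
    simpa using hder r 0 (by norm_num)
  have := hasDerivAt_iff_tendsto_slope.mp h
  refine this.congr (fun u => ?_)
  simp [slope_def_field, div_eq_inv_mul]

private lemma lem2 (r : ℝ) :
    Tendsto (fun u : ℝ => ((1+u) ^ r - 1 - r*u) / u^2) (nhdsWithin 0 {0}ᶜ)
      (nhds (r*(r-1)/2)) := by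
  have hev : ∀ᶠ u : ℝ in nhdsWithin 0 {0}ᶜ, 1 + u ≠ 0 := by
    filter_upwards [eventually_nhdsWithin_of_eventually_nhds
      (eventually_abs_sub_lt 0 one_pos)] with u hu
    intro h
    rw [sub_zero] at hu
    have : u = -1 := by linarith [neg_eq_of_add_eq_zero_right h]
    simp [this] at hu
  apply HasDerivAt.lhopital_zero_nhdsNE (f' := fun u => r * (1+u)^(r-1) - r)
    (g' := fun u => 2*u)
  · filter_upwards [hev] with u hu
    have := (hder r u hu).sub_const 1 |>.sub ((hasDerivAt_id u).const_mul r)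
    simpa [Pi.sub_def] using this
  · filter_upwards with u
    simpa using hasDerivAt_pow 2 u
  · filter_upwards [self_mem_nhdsWithin] with u hu
    simpa using hu
  · have hD := (hder r 0 (by norm_num)).sub_const 1 |>.sub
      ((hasDerivAt_id (0:ℝ)).const_mul r)
    have := hD.continuousAt.tendsto
    have : Tendsto (fun u : ℝ => (1+u) ^ r - 1 - r*u) (nhds 0) (nhds 0) := by
      simpa [Pi.sub_def] using this
    exact this.mono_left nhdsWithin_le_nhds
  · have : Tendsto (fun u : ℝ => u^2) (nhds 0) (nhds 0) := by
      simpa using (continuous_pow 2).tendsto (0:ℝ)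
    exact this.mono_left nhdsWithin_le_nhds
  · have h1 := lem1 (r-1)
    have : Tendsto (fun u : ℝ => (((1+u)^(r-1) - 1)/u) * (r/2)) (nhdsWithin 0 {0}ᶜ)
        (nhds ((r-1) * (r/2))) := h1.mul_const _
    refine (this.congr' ?_).mono_right (le_of_eq (by ring_nf))
    filter_upwards [self_mem_nhdsWithin] with u hu
    have hu' : u ≠ 0 := hu
    field_simp

private lemma lem3 (r p q : ℝ) :
    Tendsto (fun t : ℝ => ((1+(p*t+q*t^2)) ^ r - 1 - r*(p*t+q*t^2)) / t^2)
      (nhdsWithin 0 (Set.Ioi 0)) (nhds (r*(r-1)/2 * p^2)) := by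
  set N : ℝ → ℝ := fun u => (1+u) ^ r - 1 - r*u with hN
  have hu0 : Tendsto (fun t : ℝ => p*t+q*t^2) (nhdsWithin 0 (Set.Ioi 0)) (nhds 0) := by
    have : Continuous fun t : ℝ => p*t+q*t^2 := by continuity
    simpa using (this.tendsto 0).mono_left nhdsWithin_le_nhds
  rcases eq_or_ne p 0 with hp | hp
  · rcases eq_or_ne q 0 with hq | hq
    · subst hp hq
      have : (fun t : ℝ => ((1+((0:ℝ)*t+0*t^2)) ^ r - 1 - r*(0*t+0*t^2)) / t^2)
          = fun _ => (0:ℝ) := by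
        funext t; simp
      rw [this]
      simpa using tendsto_const_nhds
    · subst hp
      have huin : Tendsto (fun t : ℝ => (0:ℝ)*t+q*t^2) (nhdsWithin 0 (Set.Ioi 0))
          (nhdsWithin 0 {0}ᶜ) := by
        rw [tendsto_nhdsWithin_iff]
        refine ⟨hu0, ?_⟩
        filter_upwards [self_mem_nhdsWithin] with t ht
        have ht' : (0:ℝ) < t := ht
        simp only [zero_mul, zero_add, Set.mem_compl_iff, Set.mem_singleton_iff]
        positivity
      have hNu : Tendsto (fun u : ℝ => N u / u) (nhdsWithin 0 {0}ᶜ) (nhds 0) := by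
        have := (lem1 r).sub_const r
        simp only [sub_self] at this
        refine this.congr' ?_
        filter_upwards [self_mem_nhdsWithin] with u hu
        have hu' : u ≠ 0 := hu
        field_simp [hN]; ring
      have := (hNu.comp huin).const_mul q
      simp only [mul_zero] at this
      refine (this.congr' ?_).mono_right (le_of_eq (by norm_num))
      · filter_upwards [self_mem_nhdsWithin] with t ht
        have ht' : (0:ℝ) < t := ht
        have : (0:ℝ)*t + q*t^2 = q*t^2 := by ring
        simp only [Function.comp, hN, this]
        field_simp
  · have hev : ∀ᶠ t : ℝ in nhdsWithin 0 (Set.Ioi 0), p + q*t ≠ 0 := by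
      have hc : Tendsto (fun t : ℝ => p + q*t) (nhdsWithin 0 (Set.Ioi 0)) (nhds p) := by
        have : Continuous fun t : ℝ => p + q*t := by continuity
        simpa using (this.tendsto 0).mono_left nhdsWithin_le_nhds
      exact hc.eventually_ne hp
    have huin : Tendsto (fun t : ℝ => p*t+q*t^2) (nhdsWithin 0 (Set.Ioi 0))
        (nhdsWithin 0 {0}ᶜ) := by
      rw [tendsto_nhdsWithin_iff]
      refine ⟨hu0, ?_⟩
      filter_upwards [self_mem_nhdsWithin, hev] with t ht hpq
      have ht' : (0:ℝ) < t := ht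
      have : p*t+q*t^2 = t*(p+q*t) := by ring
      simp only [Set.mem_compl_iff, Set.mem_singleton_iff, this]
      exact mul_ne_zero (ne_of_gt ht') hpq
    have hrat : Tendsto (fun t : ℝ => (p+q*t)^2) (nhdsWithin 0 (Set.Ioi 0)) (nhds (p^2)) := by
      have : Continuous fun t : ℝ => (p+q*t)^2 := by continuity
      simpa using (this.tendsto 0).mono_left nhdsWithin_le_nhds
    have hK := (lem2 r).comp huin
    have := hK.mul hrat
    refine this.congr' ?_
    filter_upwards [self_mem_nhdsWithin, hev] with t ht hpq
    have ht' : t ≠ 0 := ne_of_gt ht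
    have hu' : p*t+q*t^2 ≠ 0 := by
      have : p*t+q*t^2 = t*(p+q*t) := by ring
      rw [this]; exact mul_ne_zero ht' hpq
    simp only [Function.comp, hN]
    rw [div_mul_eq_mul_div, div_eq_div_iff (by positivity) (by positivity)]
    ring

private lemma norm_pt (x y w z : ℝ) :
    ‖pt x y - pt w z‖ = Real.sqrt ((x-w)^2 + (y-z)^2) := by
  simp [pt, EuclideanSpace.norm_eq, Fin.sum_univ_two, PiLp.toLp_apply, sq_abs]

private lemma rpow_norm_pt (x y w z α : ℝ) :
    ‖pt x y - pt w z‖ ^ α = ((x-w)^2 + (y-z)^2) ^ (α/2) := by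
  rw [norm_pt, Real.sqrt_eq_rpow, ← Real.rpow_mul (by positivity)]
  ring_nf

private lemma key_term (α d P Q S : ℝ) (hd : 0 < d) (hS : 0 ≤ S)
    (hPQ : S = d^2*(1 + (P*(1/d) + Q*(1/d)^2))) :
    S ^ (α/2) = d ^ α * (1 + (P*(1/d) + Q*(1/d)^2)) ^ (α/2) := by
  have hd2 : (0:ℝ) < d^2 := by positivity
  have h1 : 0 ≤ 1 + (P*(1/d) + Q*(1/d)^2) := by nlinarith
  rw [hPQ, Real.mul_rpow (le_of_lt hd2) h1]
  congr 1
  rw [← Real.rpow_natCast d 2, ← Real.rpow_mul hd.le, show (2:ℕ)*(α/2) = α by push_cast; ring]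
theorem stmt4 (ℓ₁ ℓ₂ θ β α : ℝ) (hℓ₁ : 0 < ℓ₁) (hℓ₂ : 0 < ℓ₂)
    (hθ : θ ∈ Set.Ico 0 (2*π)) (hβ : β ∈ Set.Ico 0 (2*π))
    (hα : α ∈ Set.Ioo (0:ℝ) 2)
    (hne : Real.cos β * Real.cos θ - (1-α) * Real.sin β * Real.sin θ ≠ 0) :
    Tendsto (fun d : ℝ =>
      ((‖pt (ℓ₂ * Real.cos β) (ℓ₂ * Real.sin β) - pt 0 d‖ ^ α
          - ‖pt 0 0 - pt 0 d‖ ^ α)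
        - (‖pt (ℓ₂ * Real.cos β) (ℓ₂ * Real.sin β)
              - pt (ℓ₁ * Real.cos θ) (d + ℓ₁ * Real.sin θ)‖ ^ α
            - ‖pt 0 0 - pt (ℓ₁ * Real.cos θ) (d + ℓ₁ * Real.sin θ)‖ ^ α))
      / (d ^ (α - 2) * α * ℓ₁ * ℓ₂ *
          (Real.cos β * Real.cos θ - (1-α) * Real.sin β * Real.sin θ)))
      atTop (nhds 1) := by
  obtain ⟨hα0, hα2⟩ := hα
  have pythβ := Real.sin_sq_add_cos_sq β
  have pythθ := Real.sin_sq_add_cos_sq θ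
  set T : ℝ := Real.cos β * Real.cos θ - (1-α) * Real.sin β * Real.sin θ with hT
  set L2 : ℝ := (ℓ₂*Real.cos β - ℓ₁*Real.cos θ)^2 + (ℓ₂*Real.sin β - ℓ₁*Real.sin θ)^2
    with hL2
  have hC : α*ℓ₁*ℓ₂*T ≠ 0 :=
    mul_ne_zero (mul_ne_zero (mul_ne_zero hα0.ne' hℓ₁.ne') hℓ₂.ne') hne
  set A : ℝ → ℝ := fun t =>
    (1+((-2*(ℓ₂*Real.sin β))*t + ℓ₂^2*t^2))^(α/2) - 1
      - ((1+((2*(ℓ₁*Real.sin θ - ℓ₂*Real.sin β))*t + L2*t^2))^(α/2)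
          - (1+((2*(ℓ₁*Real.sin θ))*t + ℓ₁^2*t^2))^(α/2)) with hAdef
  have hA : Tendsto (fun t => A t / t^2) (nhdsWithin 0 (Set.Ioi 0))
      (nhds (α*ℓ₁*ℓ₂*T)) := by
    have h1 := lem3 (α/2) (-2*(ℓ₂*Real.sin β)) (ℓ₂^2)
    have h3 := lem3 (α/2) (2*(ℓ₁*Real.sin θ)) (ℓ₁^2)
    have h2 := lem3 (α/2) (2*(ℓ₁*Real.sin θ - ℓ₂*Real.sin β)) L2
    have hsum := ((h1.add h3).sub h2).add_const ((α/2)*(ℓ₂^2+ℓ₁^2-L2))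
    refine (hsum.congr' ?_).mono_right (le_of_eq ?_)
    · filter_upwards [self_mem_nhdsWithin] with t ht
      have ht' : t ≠ 0 := ne_of_gt ht
      simp only [hAdef]
      field_simp
      ring
    · congr 1
      rw [hT, hL2]
      linear_combination (-(α/2)*ℓ₂^2)*pythβ + (-(α/2)*ℓ₁^2)*pythθ
  have hinv : Tendsto (fun d : ℝ => 1/d) atTop (nhdsWithin 0 (Set.Ioi 0)) := by
    rw [tendsto_nhdsWithin_iff]
    constructor
    · simpa [one_div] using tendsto_inv_atTop_zero
    · filter_upwards [eventually_gt_atTop (0:ℝ)] with d hd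
      exact Set.mem_Ioi.mpr (by positivity)
  have hcomp := (hA.comp hinv).div_const (α*ℓ₁*ℓ₂*T)
  rw [div_self hC] at hcomp
  refine hcomp.congr' ?_
  filter_upwards [eventually_gt_atTop (0:ℝ)] with d hd
  have hd' : d ≠ 0 := hd.ne'
  have hdα : (0:ℝ) < d ^ α := Real.rpow_pos_of_pos hd α
  have e14 : ‖pt (ℓ₂ * Real.cos β) (ℓ₂ * Real.sin β) - pt 0 d‖ ^ α
      = d ^ α * (1+((-2*(ℓ₂*Real.sin β))*(1/d) + ℓ₂^2*(1/d)^2))^(α/2) := by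
    rw [rpow_norm_pt]
    refine key_term α d _ _ _ hd (by positivity) ?_
    field_simp
    linear_combination (ℓ₂^2)*pythβ
  have e13 : ‖pt 0 0 - pt 0 d‖ ^ α = d ^ α := by
    rw [rpow_norm_pt, show ((0:ℝ)-0)^2 + ((0:ℝ)-d)^2 = d^2 by ring,
      ← Real.rpow_natCast d 2, ← Real.rpow_mul hd.le,
      show ((2:ℕ):ℝ)*(α/2) = α by push_cast; ring]
  have e24 : ‖pt (ℓ₂ * Real.cos β) (ℓ₂ * Real.sin β)
        - pt (ℓ₁ * Real.cos θ) (d + ℓ₁ * Real.sin θ)‖ ^ α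
      = d ^ α * (1+((2*(ℓ₁*Real.sin θ - ℓ₂*Real.sin β))*(1/d) + L2*(1/d)^2))^(α/2) := by
    rw [rpow_norm_pt]
    refine key_term α d _ _ _ hd (by positivity) ?_
    rw [hL2]
    field_simp
    ring
  have e23 : ‖pt 0 0 - pt (ℓ₁ * Real.cos θ) (d + ℓ₁ * Real.sin θ)‖ ^ α
      = d ^ α * (1+((2*(ℓ₁*Real.sin θ))*(1/d) + ℓ₁^2*(1/d)^2))^(α/2) := by
    rw [rpow_norm_pt]
    refine key_term α d _ _ _ hd (by positivity) ?_
    field_simp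
    linear_combination (ℓ₁^2)*pythθ
  have hsub : d ^ (α-2) = d ^ α / d^2 := by
    rw [Real.rpow_sub hd, ← Real.rpow_natCast d 2]
    norm_num
  simp only [Function.comp, hAdef, e14, e13, e24, e23, hsub]
  field_simp
end
end

section
/- Let N > 0 and let R be a random variable with P[R ≤ r] = r²/N for 0 ≤ r ≤ √N and P[R ≤ r] = 1 for r > √N. Let 0 < α < 1 and d₀ > 0. Then for all sufficiently large N, E[exp(R^{α−2}·1[R ≥ d₀])] ≤ 1 + (2/α)(√N)^{α−2} + (exp(d₀^{α−2})·d₀^{2(α−1)}/(1−α))·N^{-1}. -/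
open MeasureTheory Real

noncomputable section

open Set
open scoped ENNReal NNReal

lemma exp_le_aux {x : ℝ} (hx : 0 ≤ x) : Real.exp x ≤ 1 + x + x ^ 2 * Real.exp x := by
  have h1 : (1 - x) * Real.exp x ≤ 1 := by
    have h0 := Real.add_one_le_exp (-x)
    have h2 : Real.exp x * Real.exp (-x) = 1 := by rw [← Real.exp_add]; simp
    nlinarith [Real.exp_pos x, mul_le_mul_of_nonneg_left h0 (Real.exp_pos x).le]
  nlinarith [Real.exp_pos x, mul_le_mul_of_nonneg_left h1 hx]

lemma pointwise_bound (α d₀ : ℝ) (hα1 : α < 1) (hd₀ : 0 < d₀) {x : ℝ} (hx : 0 ≤ x) :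
    Real.exp (if d₀ ≤ x then x ^ (α - 2) else 0) ≤
      1 + x ^ (α - 2) + Real.exp (d₀ ^ (α - 2)) * (if d₀ ≤ x then x ^ (2 * α - 4) else 0) := by
  split_ifs with h
  · have hx0 : 0 < x := lt_of_lt_of_le hd₀ h
    have ht : x ^ (α - 2) ≤ d₀ ^ (α - 2) :=
      Real.rpow_le_rpow_of_nonpos hd₀ h (by linarith)
    have htnn : 0 ≤ x ^ (α - 2) := Real.rpow_nonneg hx _
    have hsq : (x ^ (α - 2)) ^ 2 = x ^ (2 * α - 4) := by
      rw [← Real.rpow_natCast (x ^ (α - 2)) 2, ← Real.rpow_mul hx]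
      norm_num; ring_nf
    have hee : Real.exp (x ^ (α - 2)) ≤ Real.exp (d₀ ^ (α - 2)) := Real.exp_le_exp.2 ht
    have := exp_le_aux htnn
    nlinarith [sq_nonneg (x ^ (α - 2)), Real.exp_pos (x ^ (α-2))]
  · have := Real.rpow_nonneg hx (α - 2)
    simp only [Real.exp_zero, mul_zero, add_zero]
    linarith

theorem stmt6 (α d₀ : ℝ) (hα : α ∈ Set.Ioo (0:ℝ) 1) (hd₀ : 0 < d₀) :
    ∃ N₀ : ℝ, ∀ N : ℝ, N₀ ≤ N →
      ∀ (Ω : Type) [MeasurableSpace Ω] (μ : Measure Ω) [IsProbabilityMeasure μ]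
        (R : Ω → ℝ), Measurable R → (∀ ω, 0 ≤ R ω) →
        (∀ r : ℝ, 0 ≤ r → r ≤ Real.sqrt N → μ {ω | R ω ≤ r} = ENNReal.ofReal (r ^ 2 / N)) →
        (∀ r : ℝ, Real.sqrt N < r → μ {ω | R ω ≤ r} = 1) →
        (∫ ω, Real.exp (if d₀ ≤ R ω then (R ω) ^ (α - 2) else 0) ∂μ)
          ≤ 1 + (2 / α) * (Real.sqrt N) ^ (α - 2)
            + (Real.exp (d₀ ^ (α - 2)) * d₀ ^ (2 * (α - 1)) / (1 - α)) * N⁻¹ := by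
  obtain ⟨hα0, hα1⟩ := hα
  refine ⟨max 1 (d₀ ^ 2), fun N hN Ω _ μ _ R hR hR0 hcdf hcdf2 => ?_⟩
  have hN1 : (1:ℝ) ≤ N := le_trans (le_max_left _ _) hN
  have hNpos : 0 < N := by linarith
  set s := Real.sqrt N with hs_def
  have hs_pos : 0 < s := Real.sqrt_pos.2 hNpos
  have hs_sq : s ^ 2 = N := Real.sq_sqrt hNpos.le
  have hds : d₀ ≤ s := by
    have h1 : d₀ ^ 2 ≤ N := le_trans (le_max_right _ _) hN
    calc d₀ = Real.sqrt (d₀ ^ 2) := (Real.sqrt_sq hd₀.le).symm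
      _ ≤ s := Real.sqrt_le_sqrt h1
  -- the density
  set φ : ℝ → ℝ := Set.indicator (Set.Icc 0 s) (fun y => 2 * y / N) with hφ_def
  have hφ_meas : Measurable φ :=
    Measurable.indicator (by fun_prop) measurableSet_Icc
  have hφ_nonneg : ∀ x, 0 ≤ φ x := by
    intro x
    apply Set.indicator_nonneg
    intro y hy
    have : (0:ℝ) ≤ y := hy.1
    positivity
  have hφ_int : Integrable φ := by
    have : IntegrableOn (fun y : ℝ => 2 * y / N) (Set.Icc 0 s) :=
      (by fun_prop : Continuous fun y : ℝ => 2 * y / N).integrableOn_Icc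
    exact this.integrable_indicator measurableSet_Icc
  set ρ : Measure ℝ := volume.withDensity (fun x => ENNReal.ofReal (φ x)) with hρ_def
  -- value of ρ on Iic
  have key : ∀ a : ℝ, ρ (Set.Iic a)
      = ENNReal.ofReal (∫ x in Set.Iic a ∩ Set.Icc 0 s, 2 * x / N) := by
    intro a
    rw [hρ_def, withDensity_apply _ measurableSet_Iic,
      ← ofReal_integral_eq_lintegral_ofReal hφ_int.integrableOn (ae_of_all _ hφ_nonneg)]
    congr 1
    rw [hφ_def, setIntegral_indicator measurableSet_Icc]
  have hInt : ∀ b : ℝ, 0 ≤ b → ∫ x in Set.Icc 0 b, 2 * x / N = b ^ 2 / N := by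
    intro b hb
    rw [integral_Icc_eq_integral_Ioc, ← intervalIntegral.integral_of_le hb]
    have : ∀ x : ℝ, 2 * x / N = (2 / N) * x := fun x => by ring
    simp_rw [this]
    rw [intervalIntegral.integral_const_mul, integral_id]
    field_simp
    ring
  have hρ_fin : IsFiniteMeasure ρ := by
    constructor
    rw [hρ_def, withDensity_apply _ MeasurableSet.univ, Measure.restrict_univ,
      ← ofReal_integral_eq_lintegral_ofReal hφ_int (ae_of_all _ hφ_nonneg)]
    exact ENNReal.ofReal_lt_top
  set ν : Measure ℝ := μ.map R with hν_def
  have hν_prob : IsProbabilityMeasure ν := Measure.isProbabilityMeasure_map hR.aemeasurable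
  -- identify the law
  have h_map : ν = ρ := by
    refine Measure.ext_of_Iic ν ρ (fun a => ?_)
    rw [hν_def, Measure.map_apply hR measurableSet_Iic, key]
    have hpre : R ⁻¹' Set.Iic a = {ω | R ω ≤ a} := rfl
    rw [hpre]
    rcases lt_or_ge a 0 with ha | ha
    · have h1 : {ω | R ω ≤ a} = (∅ : Set Ω) := by
        ext ω; simp only [Set.mem_setOf_eq, Set.mem_empty_iff_false, iff_false, not_le]
        exact lt_of_lt_of_le ha (hR0 ω)
      have h2 : Set.Iic a ∩ Set.Icc 0 s = (∅ : Set ℝ) := by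
        ext x; simp only [Set.mem_inter_iff, Set.mem_Iic, Set.mem_Icc,
          Set.mem_empty_iff_false, iff_false, not_and]
        intro hxa hx0 _; linarith
      rw [h1, h2]
      simp
    rcases le_or_gt a s with has | has
    · have h2 : Set.Iic a ∩ Set.Icc 0 s = Set.Icc 0 a := by
        ext x
        simp only [Set.mem_inter_iff, Set.mem_Iic, Set.mem_Icc]
        constructor
        · rintro ⟨h1, h2, h3⟩; exact ⟨h2, h1⟩
        · rintro ⟨h1, h2⟩; exact ⟨h2, h1, le_trans h2 has⟩
      rw [h2, hcdf a ha has, hInt a ha]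
    · have h2 : Set.Iic a ∩ Set.Icc 0 s = Set.Icc 0 s := by
        ext x
        simp only [Set.mem_inter_iff, Set.mem_Iic, Set.mem_Icc]
        constructor
        · rintro ⟨h1, h2, h3⟩; exact ⟨h2, h3⟩
        · rintro ⟨h1, h2⟩; exact ⟨le_trans h2 has.le, h1, h2⟩
      rw [h2, hcdf2 a has, hInt s hs_pos.le, hs_sq]
      rw [div_self hNpos.ne']
      simp
  -- abbreviations
  set c : ℝ := Real.exp (d₀ ^ (α - 2)) with hc_def
  have hc_pos : 0 < c := Real.exp_pos _
  set E : ℝ → ℝ := fun x => Real.exp (if d₀ ≤ x then x ^ (α - 2) else 0) with hE_def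
  have hE_meas : Measurable E := by
    apply Measurable.exp
    exact Measurable.ite measurableSet_Ici (by fun_prop) measurable_const
  set g : ℝ → ℝ := fun x =>
    (1 + x ^ (α - 2)) + c * (if d₀ ≤ x then x ^ (2 * α - 4) else 0) with hg_def
  -- a.e. nonneg for ν
  have h_ae_nonneg : ∀ᵐ x ∂ν, 0 ≤ x := by
    rw [ae_iff]
    have h1 : {x : ℝ | ¬ 0 ≤ x} = Set.Iio 0 := by ext x; simp
    rw [h1, hν_def, Measure.map_apply hR measurableSet_Iio]
    have h2 : R ⁻¹' Set.Iio 0 = (∅ : Set Ω) := by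
      ext ω; simp only [Set.mem_preimage, Set.mem_Iio, Set.mem_empty_iff_false,
        iff_false, not_lt]
      exact hR0 ω
    rw [h2]; simp
  have h_ae_bound : ∀ᵐ x ∂ν, E x ≤ g x := by
    filter_upwards [h_ae_nonneg] with x hx
    exact pointwise_bound α d₀ hα1 hd₀ hx
  -- integrability pieces
  have hint1 : Integrable (fun x : ℝ => x ^ (α - 2)) ν := by
    rw [h_map, hρ_def]
    rw [integrable_withDensity_iff (by fun_prop) (ae_of_all _ fun x => ENNReal.ofReal_lt_top)]
    have heq : (fun x : ℝ => x ^ (α - 2) * (ENNReal.ofReal (φ x)).toReal)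
        = Set.indicator (Set.Icc 0 s) (fun x => x ^ (α - 2) * (2 * x / N)) := by
      funext x
      rw [ENNReal.toReal_ofReal (hφ_nonneg x), hφ_def]
      by_cases hx : x ∈ Set.Icc 0 s
      · rw [Set.indicator_of_mem hx, Set.indicator_of_mem hx]
      · rw [Set.indicator_of_notMem hx, Set.indicator_of_notMem hx, mul_zero]
    rw [heq]
    apply IntegrableOn.integrable_indicator _ measurableSet_Icc
    have h2 : IntegrableOn (fun x : ℝ => (2 / N) * x ^ (α - 1)) (Set.Icc 0 s) := by
      rw [integrableOn_Icc_iff_integrableOn_Ioc]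
      have h3 : IntervalIntegrable (fun x : ℝ => x ^ (α - 1)) volume 0 s :=
        intervalIntegral.intervalIntegrable_rpow' (by linarith)
      exact (intervalIntegrable_iff_integrableOn_Ioc_of_le hs_pos.le).1 (h3.const_mul (2 / N))
    apply h2.congr_fun _ measurableSet_Icc
    intro x hx
    show (2 / N) * x ^ (α - 1) = x ^ (α - 2) * (2 * x / N)
    rcases eq_or_lt_of_le hx.1 with h0 | h0
    · rw [← h0, Real.zero_rpow (by intro h; linarith),
        Real.zero_rpow (by intro h; linarith)]
      ring
    · rw [show α - 1 = (α - 2) + 1 by ring, Real.rpow_add h0, Real.rpow_one]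
      ring
  have hint2 : Integrable (fun x : ℝ => (if d₀ ≤ x then x ^ (2 * α - 4) else 0)) ν := by
    apply Integrable.mono' (integrable_const (d₀ ^ (2 * α - 4)))
    · apply Measurable.aestronglyMeasurable
      exact Measurable.ite measurableSet_Ici (by fun_prop) measurable_const
    · filter_upwards [h_ae_nonneg] with x hx
      rw [Real.norm_eq_abs]
      split_ifs with h
      · rw [abs_of_nonneg (Real.rpow_nonneg hx _)]
        exact Real.rpow_le_rpow_of_nonpos hd₀ h (by linarith)
      · rw [abs_zero]
        exact Real.rpow_nonneg hd₀.le _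
  have hg_int : Integrable g ν :=
    ((integrable_const 1).add hint1).add (hint2.const_mul c)
  -- the main comparison
  have step1 : (∫ ω, Real.exp (if d₀ ≤ R ω then (R ω) ^ (α - 2) else 0) ∂μ)
      = ∫ x, E x ∂ν := (integral_map hR.aemeasurable hE_meas.aestronglyMeasurable).symm
  have step2 : ∫ x, E x ∂ν ≤ ∫ x, g x ∂ν :=
    integral_mono_of_nonneg (ae_of_all _ fun x => (Real.exp_pos _).le) hg_int h_ae_bound
  -- computing ∫ g
  have hρ_int_eq : ∀ h : ℝ → ℝ, ∫ x, h x ∂ρ = ∫ x in Set.Icc 0 s, (2 * x / N) * h x := by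
    intro h
    have hρ' : ρ = volume.withDensity (fun x => ((fun y => (φ y).toNNReal) x : ℝ≥0∞)) := rfl
    rw [hρ', integral_withDensity_eq_integral_smul (hφ_meas.real_toNNReal) h]
    have heq : (fun x => (φ x).toNNReal • h x)
        = Set.indicator (Set.Icc 0 s) (fun x => (2 * x / N) * h x) := by
      funext x
      rw [NNReal.smul_def, smul_eq_mul, Real.coe_toNNReal _ (hφ_nonneg x), hφ_def]
      by_cases hx : x ∈ Set.Icc 0 s
      · rw [Set.indicator_of_mem hx, Set.indicator_of_mem hx]
      · rw [Set.indicator_of_notMem hx, Set.indicator_of_notMem hx, zero_mul]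
    rw [heq, integral_indicator measurableSet_Icc]
  have hsplit : ∫ x, g x ∂ν
      = (∫ _, (1:ℝ) ∂ν) + (∫ x, x ^ (α - 2) ∂ν)
        + c * ∫ x, (if d₀ ≤ x then x ^ (2 * α - 4) else 0) ∂ν := by
    have ha : Integrable (fun x : ℝ => 1 + x ^ (α - 2)) ν := (integrable_const 1).add hint1
    have hb : Integrable (fun x : ℝ => c * (if d₀ ≤ x then x ^ (2 * α - 4) else 0)) ν :=
      hint2.const_mul c
    simp only [hg_def]
    rw [integral_add ha hb, integral_add (integrable_const 1) hint1, integral_const_mul]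
  have hone : (∫ _, (1:ℝ) ∂ν) = 1 := by simp
  -- I₁
  have hI1 : (∫ x, x ^ (α - 2) ∂ν) = (2 / α) * s ^ (α - 2) := by
    rw [h_map, hρ_int_eq]
    rw [integral_Icc_eq_integral_Ioc, ← intervalIntegral.integral_of_le hs_pos.le]
    have hEq : Set.EqOn (fun x : ℝ => 2 * x / N * x ^ (α - 2))
        (fun x : ℝ => (2 / N) * x ^ (α - 1)) (Set.uIcc 0 s) := by
      intro x hx
      rw [Set.uIcc_of_le hs_pos.le] at hx
      show 2 * x / N * x ^ (α - 2) = (2 / N) * x ^ (α - 1)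
      rcases eq_or_lt_of_le hx.1 with h0 | h0
      · rw [← h0, Real.zero_rpow (by intro h; linarith),
          Real.zero_rpow (by intro h; linarith)]
        ring
      · rw [show α - 1 = (α - 2) + 1 by ring, Real.rpow_add h0, Real.rpow_one]
        ring
    rw [intervalIntegral.integral_congr hEq,
      intervalIntegral.integral_const_mul, integral_rpow (Or.inl (by linarith)),
      Real.zero_rpow (by intro h; linarith)]
    have hsN : s ^ (α - 1 + 1) = s ^ (α - 2) * N := by
      rw [show α - 1 + 1 = (α - 2) + 2 by ring, Real.rpow_add hs_pos,
        Real.rpow_two, hs_sq]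
    rw [hsN]
    field_simp [hα0.ne']
    ring
  -- I₂
  have hI2 : (∫ x, (if d₀ ≤ x then x ^ (2 * α - 4) else 0) ∂ν)
      = (2 / N) * ((s ^ (2 * α - 2) - d₀ ^ (2 * α - 2)) / (2 * α - 2)) := by
    rw [h_map, hρ_int_eq]
    have heq : ∀ x : ℝ, (2 * x / N) * (if d₀ ≤ x then x ^ (2 * α - 4) else 0)
        = Set.indicator (Set.Ici d₀) (fun y => (2 * y / N) * y ^ (2 * α - 4)) x := by
      intro x
      rw [Set.indicator_apply]
      simp only [Set.mem_Ici]
      split_ifs <;> simp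
    simp_rw [heq]
    rw [setIntegral_indicator measurableSet_Ici]
    have h2 : Set.Icc 0 s ∩ Set.Ici d₀ = Set.Icc d₀ s := by
      ext x
      simp only [Set.mem_inter_iff, Set.mem_Icc, Set.mem_Ici]
      constructor
      · rintro ⟨⟨h1, h2⟩, h3⟩; exact ⟨h3, h2⟩
      · rintro ⟨h1, h2⟩; exact ⟨⟨le_trans hd₀.le h1, h2⟩, h1⟩
    rw [h2, integral_Icc_eq_integral_Ioc, ← intervalIntegral.integral_of_le hds]
    have hEq : Set.EqOn (fun x : ℝ => 2 * x / N * x ^ (2 * α - 4))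
        (fun x : ℝ => (2 / N) * x ^ (2 * α - 3)) (Set.uIcc d₀ s) := by
      intro x hx
      rw [Set.uIcc_of_le hds] at hx
      have h0 : 0 < x := lt_of_lt_of_le hd₀ hx.1
      show 2 * x / N * x ^ (2 * α - 4) = (2 / N) * x ^ (2 * α - 3)
      rw [show 2 * α - 3 = (2 * α - 4) + 1 by ring, Real.rpow_add h0, Real.rpow_one]
      ring
    rw [intervalIntegral.integral_congr hEq,
      intervalIntegral.integral_const_mul,
      integral_rpow (Or.inr ⟨by intro h; linarith, by
        rw [Set.uIcc_of_le hds]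
        intro h
        exact absurd h.1 (by linarith)⟩)]
    rw [show (2 : ℝ) * α - 3 + 1 = 2 * α - 2 by ring]
  -- final estimate on I₂ term
  have hI2_bound : c * ((2 / N) * ((s ^ (2 * α - 2) - d₀ ^ (2 * α - 2)) / (2 * α - 2)))
      ≤ (c * d₀ ^ (2 * (α - 1)) / (1 - α)) * N⁻¹ := by
    have hA : 0 ≤ s ^ (2 * α - 2) := Real.rpow_nonneg hs_pos.le _
    have hB : 0 ≤ d₀ ^ (2 * α - 2) := Real.rpow_nonneg hd₀.le _
    have h1α : 0 < 1 - α := by linarith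
    have hexp : d₀ ^ (2 * (α - 1)) = d₀ ^ (2 * α - 2) := by ring_nf
    rw [hexp]
    have hne1 : 2 * α - 2 ≠ 0 := ne_of_lt (by linarith)
    have hne2 : (1 : ℝ) - α ≠ 0 := ne_of_gt h1α
    have hne3 : N ≠ 0 := hNpos.ne'
    have heq : (2 / N) * ((s ^ (2 * α - 2) - d₀ ^ (2 * α - 2)) / (2 * α - 2))
        = (d₀ ^ (2 * α - 2) - s ^ (2 * α - 2)) / ((1 - α) * N) := by
      rw [show 2 * α - 2 = -2 * (1 - α) by ring]
      field_simp
      ring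
    calc c * ((2 / N) * ((s ^ (2 * α - 2) - d₀ ^ (2 * α - 2)) / (2 * α - 2)))
        = c * ((d₀ ^ (2 * α - 2) - s ^ (2 * α - 2)) / ((1 - α) * N)) := by rw [heq]
      _ ≤ c * (d₀ ^ (2 * α - 2) / ((1 - α) * N)) := by
          apply mul_le_mul_of_nonneg_left _ hc_pos.le
          gcongr
          linarith
      _ = (c * d₀ ^ (2 * α - 2) / (1 - α)) * N⁻¹ := by field_simp
  -- assemble
  rw [step1]
  refine step2.trans ?_
  rw [hsplit, hone, hI1, hI2]
  have := hI2_bound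
  linarith
end
end

section
/- For three independent points U₁, U₂, U₃ uniformly distributed on the unit circle S¹, the expected area of the triangle Δ(U₁,U₂,U₃) equals 3/(2π). -/
open MeasureTheory Real

noncomputable section


lemma tri2 (a b : ℝ) : Real.sin (2*a) + Real.sin (2*b) - Real.sin (2*(a+b))
    = 4 * Real.sin a * Real.sin b * Real.sin (a+b) := by
  rw [Real.sin_two_mul, Real.sin_two_mul, Real.sin_two_mul, Real.sin_add, Real.cos_add]
  linear_combination (-2)*Real.sin a*Real.cos a*(Real.sin_sq_add_cos_sq b) +
    (-2)*Real.sin b*Real.cos b*(Real.sin_sq_add_cos_sq a)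

lemma tri (A B : ℝ) : Real.sin A + Real.sin B - Real.sin (A + B)
    = 4 * Real.sin (A/2) * Real.sin (B/2) * Real.sin ((A+B)/2) := by
  have h := tri2 (A/2) (B/2)
  rw [show 2*(A/2+B/2) = A+B from by ring, show A/2+B/2 = (A+B)/2 from by ring,
    show 2*(A/2) = A from by ring, show 2*(B/2) = B from by ring] at h
  exact h

lemma det_eq (t₁ t₂ t₃ : ℝ) :
    (Real.cos t₂ - Real.cos t₁) * (Real.sin t₃ - Real.sin t₁)
      - (Real.cos t₃ - Real.cos t₁) * (Real.sin t₂ - Real.sin t₁)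
    = 4 * Real.sin ((t₂-t₁)/2) * Real.sin ((t₃-t₂)/2) * Real.sin ((t₃-t₁)/2) := by
  have h := tri (t₂ - t₁) (t₃ - t₂)
  rw [show (t₂-t₁) + (t₃-t₂) = t₃ - t₁ from by ring] at h
  rw [Real.sin_sub, Real.sin_sub, Real.sin_sub] at h
  linear_combination h

lemma key (t₁ t₂ t₃ : ℝ) :
    (1/2) * |(Real.cos t₂ - Real.cos t₁) * (Real.sin t₃ - Real.sin t₁)
          - (Real.cos t₃ - Real.cos t₁) * (Real.sin t₂ - Real.sin t₁)|
    = 2 * |Real.sin ((t₂-t₁)/2) * Real.sin ((t₃-t₁)/2) * Real.sin ((t₃-t₂)/2)| := by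
  rw [det_eq]
  rw [show (4:ℝ) * Real.sin ((t₂-t₁)/2) * Real.sin ((t₃-t₂)/2) * Real.sin ((t₃-t₁)/2)
      = 4 * (Real.sin ((t₂-t₁)/2) * Real.sin ((t₃-t₁)/2) * Real.sin ((t₃-t₂)/2)) from by ring,
    abs_mul]
  rw [abs_of_nonneg (by norm_num : (0:ℝ) ≤ 4)]
  ring


def f0 (s t : ℝ) : ℝ := 2 * |Real.sin (s/2) * Real.sin (t/2) * Real.sin ((t - s)/2)|

lemma f0_cont (s : ℝ) : Continuous (f0 s) := by
  unfold f0; fun_prop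

lemma f0_per_t (s : ℝ) : Function.Periodic (f0 s) (2*π) := by
  intro t
  unfold f0
  rw [show (t + 2*π)/2 = t/2 + π from by ring,
      show (t + 2*π - s)/2 = (t-s)/2 + π from by ring,
      Real.sin_add_pi, Real.sin_add_pi]
  rw [show Real.sin (s/2) * -Real.sin (t/2) * -Real.sin ((t-s)/2)
      = Real.sin (s/2) * Real.sin (t/2) * Real.sin ((t-s)/2) from by ring]

lemma f0_per_s (s t : ℝ) : f0 (s + 2*π) t = f0 s t := by
  unfold f0
  rw [show (s + 2*π)/2 = s/2 + π from by ring,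
      show (t - (s + 2*π))/2 = (t-s)/2 - π from by ring,
      Real.sin_add_pi, Real.sin_sub_pi]
  rw [show -Real.sin (s/2) * Real.sin (t/2) * -Real.sin ((t-s)/2)
      = Real.sin (s/2) * Real.sin (t/2) * Real.sin ((t-s)/2) from by ring]

def G (s : ℝ) : ℝ := ∫ t in (0:ℝ)..(2*π), f0 s t

lemma G_per : Function.Periodic G (2*π) := by
  intro s
  unfold G
  congr 1
  funext t
  exact f0_per_s s t

lemma hasDeriv_H (s t : ℝ) :
    HasDerivAt (fun u => (1/2)*(u * Real.cos (s/2) - Real.sin (u - s/2)))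
      (Real.sin (t/2) * Real.sin ((t-s)/2)) t := by
  have h1 : HasDerivAt (fun u : ℝ => u * Real.cos (s/2)) (Real.cos (s/2)) t := by
    simpa using (hasDerivAt_id t).mul_const (Real.cos (s/2))
  have h2 : HasDerivAt (fun u : ℝ => Real.sin (u - s/2)) (Real.cos (t - s/2)) t := by
    simpa [Function.comp_def] using (Real.hasDerivAt_sin (t - s/2)).comp t ((hasDerivAt_id t).sub_const (s/2))
  have h := (h1.sub h2).const_mul (1/2 : ℝ)
  refine h.congr_deriv ?_
  rw [show t - s/2 = t/2 + (t-s)/2 from by ring, Real.cos_add]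
  rw [show s/2 = t/2 - (t-s)/2 from by ring, Real.cos_sub]
  ring

lemma int_P (s a b : ℝ) : (∫ t in a..b, Real.sin (t/2) * Real.sin ((t-s)/2))
    = (1/2)*(b * Real.cos (s/2) - Real.sin (b - s/2))
      - (1/2)*(a * Real.cos (s/2) - Real.sin (a - s/2)) := by
  apply intervalIntegral.integral_eq_sub_of_hasDerivAt
  · intro t _
    exact hasDeriv_H s t
  · apply Continuous.intervalIntegrable
    fun_prop

lemma G_val {s : ℝ} (hs0 : 0 ≤ s) (hs2 : s ≤ 2*π) :
    G s = (π - s) * Real.sin s + 2 - 2 * Real.cos s := by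
  have hπ := Real.pi_pos
  have hσ : 0 ≤ Real.sin (s/2) :=
    Real.sin_nonneg_of_nonneg_of_le_pi (by linarith) (by linarith)
  unfold G
  have hint : ∀ a b : ℝ, IntervalIntegrable (f0 s) volume a b :=
    fun a b => (f0_cont s).intervalIntegrable a b
  rw [← intervalIntegral.integral_add_adjacent_intervals (hint 0 s) (hint s (2*π))]
  have e1 : (∫ t in (0:ℝ)..s, f0 s t)
      = ∫ t in (0:ℝ)..s, (-(2 * Real.sin (s/2))) * (Real.sin (t/2) * Real.sin ((t-s)/2)) := by
    apply intervalIntegral.integral_congr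
    intro t ht
    rw [Set.uIcc_of_le hs0] at ht
    obtain ⟨ht0, hts⟩ := ht
    have h1 : 0 ≤ Real.sin (t/2) :=
      Real.sin_nonneg_of_nonneg_of_le_pi (by linarith) (by linarith)
    have h2 : Real.sin ((t-s)/2) ≤ 0 := by
      have h3 : 0 ≤ Real.sin ((s-t)/2) :=
        Real.sin_nonneg_of_nonneg_of_le_pi (by linarith) (by linarith)
      rw [show (t-s)/2 = -((s-t)/2) from by ring, Real.sin_neg]
      linarith
    unfold f0
    rw [abs_of_nonpos (mul_nonpos_of_nonneg_of_nonpos (mul_nonneg hσ h1) h2)]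
    ring
  have e2 : (∫ t in s..(2*π), f0 s t)
      = ∫ t in s..(2*π), (2 * Real.sin (s/2)) * (Real.sin (t/2) * Real.sin ((t-s)/2)) := by
    apply intervalIntegral.integral_congr
    intro t ht
    rw [Set.uIcc_of_le hs2] at ht
    obtain ⟨hts, ht2⟩ := ht
    have h1 : 0 ≤ Real.sin (t/2) :=
      Real.sin_nonneg_of_nonneg_of_le_pi (by linarith) (by linarith)
    have h2 : 0 ≤ Real.sin ((t-s)/2) :=
      Real.sin_nonneg_of_nonneg_of_le_pi (by linarith) (by linarith)
    unfold f0
    rw [abs_of_nonneg (mul_nonneg (mul_nonneg hσ h1) h2)]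
    ring
  rw [e1, e2, intervalIntegral.integral_const_mul, intervalIntegral.integral_const_mul,
    int_P, int_P]
  have hsin : Real.sin s = 2 * Real.sin (s/2) * Real.cos (s/2) := by
    have h := Real.sin_two_mul (s/2)
    rw [show 2*(s/2) = s from by ring] at h
    exact h
  have hcos : Real.cos s = 2 * Real.cos (s/2)^2 - 1 := by
    have h := Real.cos_two_mul (s/2)
    rw [show 2*(s/2) = s from by ring] at h
    exact h
  have hpy := Real.sin_sq_add_cos_sq (s/2)
  have h0 : Real.sin (0 - s/2) = -Real.sin (s/2) := by
    rw [show (0:ℝ) - s/2 = -(s/2) from by ring, Real.sin_neg]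
  have h2π : Real.sin (2*π - s/2) = -Real.sin (s/2) := by
    rw [show 2*π - s/2 = -(s/2) + 2*π from by ring, Real.sin_add_two_pi, Real.sin_neg]
  have hss : Real.sin (s - s/2) = Real.sin (s/2) := by
    rw [show s - s/2 = s/2 from by ring]
  rw [h0, h2π, hss]
  linear_combination (-(π - s)) * hsin + 2 * hcos + 4 * hpy

lemma intG : (∫ s in (0:ℝ)..(2*π), G s) = 6*π := by
  have hπ := Real.pi_pos
  have e : (∫ s in (0:ℝ)..(2*π), G s)
      = ∫ s in (0:ℝ)..(2*π), ((π - s) * Real.sin s + 2 - 2 * Real.cos s) := by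
    apply intervalIntegral.integral_congr
    intro s hs
    rw [Set.uIcc_of_le (by linarith)] at hs
    exact G_val hs.1 hs.2
  rw [e]
  have hD : ∀ s : ℝ, HasDerivAt (fun u => -((π - u) * Real.cos u) + 2*u - 3*Real.sin u)
      ((π - s) * Real.sin s + 2 - 2 * Real.cos s) s := by
    intro s
    have h1 : HasDerivAt (fun u : ℝ => (π - u) * Real.cos u)
        ((-1) * Real.cos s + (π - s) * (-Real.sin s)) s :=
      (((hasDerivAt_id s).const_sub π)).mul (Real.hasDerivAt_cos s)
    have h2 : HasDerivAt (fun u : ℝ => 2*u) (2:ℝ) s := by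
      simpa using (hasDerivAt_id s).const_mul (2:ℝ)
    have h3 : HasDerivAt (fun u : ℝ => 3*Real.sin u) (3 * Real.cos s) s :=
      (Real.hasDerivAt_sin s).const_mul 3
    have h := (h1.neg.add h2).sub h3
    refine h.congr_deriv ?_
    ring
  rw [intervalIntegral.integral_eq_sub_of_hasDerivAt (fun s _ => hD s)
    (by apply Continuous.intervalIntegrable; fun_prop)]
  simp [Real.cos_two_pi, Real.sin_two_pi]
  ring

lemma inner3 (t₁ t₂ : ℝ) :
    (∫ t₃ in (0:ℝ)..(2*π), 2 * |Real.sin ((t₂-t₁)/2) * Real.sin ((t₃-t₁)/2) * Real.sin ((t₃-t₂)/2)|)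
    = G (t₂ - t₁) := by
  have e : (fun t₃ => 2 * |Real.sin ((t₂-t₁)/2) * Real.sin ((t₃-t₁)/2) * Real.sin ((t₃-t₂)/2)|)
      = fun t₃ => f0 (t₂-t₁) (t₃ - t₁) := by
    funext t₃
    unfold f0
    rw [show t₃ - t₁ - (t₂ - t₁) = t₃ - t₂ from by ring]
  rw [e, intervalIntegral.integral_comp_sub_right (fun x => f0 (t₂-t₁) x) t₁]
  unfold G
  have h := (f0_per_t (t₂ - t₁)).intervalIntegral_add_eq (0 - t₁) 0
  rw [show (2*π - t₁) = (0 - t₁) + 2*π from by ring]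
  rw [h]
  norm_num

lemma inner2 (t₁ : ℝ) : (∫ t₂ in (0:ℝ)..(2*π), G (t₂ - t₁)) = ∫ s in (0:ℝ)..(2*π), G s := by
  rw [intervalIntegral.integral_comp_sub_right (fun x => G x) t₁]
  have h := G_per.intervalIntegral_add_eq (0 - t₁) 0
  rw [show (2*π - t₁) = (0 - t₁) + 2*π from by ring, h]
  norm_num


theorem stmt13 :
    (∫ t₁ in (0:ℝ)..(2*π), ∫ t₂ in (0:ℝ)..(2*π), ∫ t₃ in (0:ℝ)..(2*π),
        (1/2) * |(Real.cos t₂ - Real.cos t₁) * (Real.sin t₃ - Real.sin t₁)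
          - (Real.cos t₃ - Real.cos t₁) * (Real.sin t₂ - Real.sin t₁)|)
      / (2 * π) ^ 3 = 3 / (2 * π) := by
  have hπ : π ≠ 0 := Real.pi_ne_zero
  simp only [key, inner3, inner2, intG]
  rw [intervalIntegral.integral_const]
  rw [smul_eq_mul]
  field_simp
  ring
end
end
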